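/- arXiv:0802.1360 — 4 statements merged into one kernel-verified Lean document; each statement's English description precedes it below -/
import Mathlib

section
/- If a completely positive trace-preserving map Φ from d_A×d_A matrices to d_B×d_B matrices maps every pure state to a pure state, then either Φ(ρ) = UρU† for some isometry U (so d_A ≤ d_B), or Φ(ρ) = (Tr ρ)|φ⟩⟨φ| for a fixed pure state |φ⟩. -/
open Matrix Kronecker BigOperators ComplexOrder

noncomputable def krausMap {n m ι : Type*} [Fintype n] [Fintype ι]
    (A : ι → Matrix m n ℂ) : Matrix n n ℂ →ₗ[ℂ] Matrix m m ℂ where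
  toFun ρ := ∑ k, A k * ρ * (A k)ᴴ
  map_add' ρ σ := by
    simp [Matrix.mul_add, Matrix.add_mul, Finset.sum_add_distrib]
  map_smul' c ρ := by
    simp [Matrix.mul_smul, Matrix.smul_mul, Finset.smul_sum]

noncomputable def complementMap {n m ι : Type*} [Fintype n] [Fintype m] [Fintype ι]
    (A : ι → Matrix m n ℂ) : Matrix n n ℂ →ₗ[ℂ] Matrix ι ι ℂ where
  toFun ρ := Matrix.of fun j k => (A j * ρ * (A k)ᴴ).trace
  map_add' ρ σ := by
    ext j k
    simp [Matrix.mul_add, Matrix.add_mul]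
  map_smul' c ρ := by
    ext j k
    simp [Matrix.mul_smul, Matrix.smul_mul]

noncomputable def choi {n m : Type*} [Fintype n] [DecidableEq n]
    (Φ : Matrix n n ℂ →ₗ[ℂ] Matrix m m ℂ) : Matrix (n × m) (n × m) ℂ :=
  Matrix.of fun p q => Φ (Matrix.single p.1 q.1 1) p.2 q.2

def IsCPTP {n m : Type*} [Fintype n] [DecidableEq n] [Fintype m]
    (Φ : Matrix n n ℂ →ₗ[ℂ] Matrix m m ℂ) : Prop :=
  (choi Φ).PosSemidef ∧ ∀ ρ, (Φ ρ).trace = ρ.trace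

def IsKrausRep {n m ι : Type*} [Fintype n] [DecidableEq n] [Fintype m] [Fintype ι]
    (A : ι → Matrix m n ℂ) (Φ : Matrix n n ℂ →ₗ[ℂ] Matrix m m ℂ) : Prop :=
  (∀ ρ, Φ ρ = ∑ k, A k * ρ * (A k)ᴴ) ∧ ∑ k, (A k)ᴴ * A k = 1

def Degradable {n m : Type*} [Fintype n] [DecidableEq n] [Fintype m] [DecidableEq m]
    (Φ : Matrix n n ℂ →ₗ[ℂ] Matrix m m ℂ) : Prop :=
  ∃ (e : ℕ) (A : Fin e → Matrix m n ℂ), IsKrausRep A Φ ∧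
    ∃ Ψ : Matrix m m ℂ →ₗ[ℂ] Matrix (Fin e) (Fin e) ℂ,
      IsCPTP Ψ ∧ Ψ ∘ₗ Φ = complementMap A

def AntiDegradable {n m : Type*} [Fintype n] [DecidableEq n] [Fintype m] [DecidableEq m]
    (Φ : Matrix n n ℂ →ₗ[ℂ] Matrix m m ℂ) : Prop :=
  ∃ (e : ℕ) (A : Fin e → Matrix m n ℂ), IsKrausRep A Φ ∧
    ∃ Λ : Matrix (Fin e) (Fin e) ℂ →ₗ[ℂ] Matrix m m ℂ,
      IsCPTP Λ ∧ Λ ∘ₗ complementMap A = Φ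

/-!
Write `Φ` in Kraus form `Φ ρ = ∑ₖ Aₖ ρ Aₖᴴ`, read off from a factorisation `Bᴴ B`
of its Choi matrix.
For a unit vector `ψ`, `∑ₖ (Aₖ ψ)(Aₖ ψ)ᴴ` is a rank-one projection, so the matrix with columns
`Aₖ ψ` has rank at most one: all `Aₖ ψ` lie on a common line. If some `Aₖ₀` has rank at least two,
this forces every `Aₖ` to be a multiple `cₖ • Aₖ₀`, and `Φ` is conjugation by the isometry
`(∑ₖ |cₖ|²)^{1/2} • Aₖ₀`. Otherwise every `Aₖ` has rank at most one and then all of them map into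
one line `ℂ φ`, so `Φ ρ` is a multiple of `φ φᴴ`, which trace preservation pins down to `Tr ρ`.
-/

theorem Submodule.eq_top_of_forall_notMem_imp_mem {R M : Type*} [Ring R] [AddCommGroup M]
    [Module R M] {p q : Submodule R M} (hp : p ≠ ⊤) (h : ∀ x, x ∉ p → x ∈ q) : q = ⊤ := by
  obtain ⟨e, he⟩ : ∃ e, e ∉ p := by
    by_contra! hall
    exact hp (eq_top_iff.2 fun x _ => hall x)
  refine eq_top_iff.2 fun x _ => ?_
  by_cases hx : x ∈ p
  · have hex : e + x ∉ p := fun hex => he (by simpa using p.sub_mem hex hx)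
    simpa using q.sub_mem (h _ hex) (h e he)
  · exact h x hx

section Proportional

variable {K m : Type*} [Field K]

/-- Linear dependence of `u` and `v`, as the vanishing of the `2 × 2` minors of `[u v]`. -/
def Proportional (u v : m → K) : Prop := ∀ i j, u i * v j = u j * v i

variable {u v w : m → K}

theorem proportional_of_mem_span_singleton (hu : u ∈ K ∙ w) (hv : v ∈ K ∙ w) :
    Proportional u v := by
  obtain ⟨a, rfl⟩ := Submodule.mem_span_singleton.1 hu
  obtain ⟨b, rfl⟩ := Submodule.mem_span_singleton.1 hv
  intro i j
  simp only [Pi.smul_apply, smul_eq_mul]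
  ring

theorem Proportional.mem_span_singleton (h : Proportional u v) (hu : u ≠ 0) : v ∈ K ∙ u := by
  obtain ⟨i, hi⟩ := Function.ne_iff.1 hu
  refine Submodule.mem_span_singleton.2 ⟨v i / u i, funext fun j => ?_⟩
  simp only [Pi.smul_apply, smul_eq_mul, Pi.zero_apply] at hi ⊢
  field_simp
  linear_combination (h i j).symm

variable {V : Type*} [AddCommGroup V] [Module K V]

theorem eq_smul_of_forall_proportional {f g : V →ₗ[K] m → K}
    (h : ∀ x, Proportional (f x) (g x)) {x₁ x₂ : V} (hind : ¬ Proportional (f x₁) (f x₂)) :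
    ∃ c : K, g = c • f := by
  have hu : f x₁ ≠ 0 := fun h0 => hind (by simp [h0, Proportional])
  obtain ⟨c, hc⟩ := Submodule.mem_span_singleton.1 ((h x₁).mem_span_singleton hu)
  -- `g x = d • f x`, and `g (x₁ + x)` is proportional to `f x₁ + f x`: so `d = c` unless
  -- `f x₁` and `f x` are dependent
  have hkey : ∀ x, ¬ Proportional (f x₁) (f x) → g x = c • f x := by
    intro x hx
    have hfx : f x ≠ 0 := fun h0 => hx (by simp [h0, Proportional])
    obtain ⟨d, hd⟩ := Submodule.mem_span_singleton.1 ((h x).mem_span_singleton hfx)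
    have hsum := h (x₁ + x)
    rw [map_add, map_add, ← hc, ← hd] at hsum
    obtain rfl : d = c := by
      by_contra hne
      refine hx fun i j => ?_
      have hij := hsum i j
      simp only [Pi.add_apply, Pi.smul_apply, smul_eq_mul] at hij
      have : (d - c) * (f x₁ i * f x j - f x₁ j * f x i) = 0 := by linear_combination hij
      rcases mul_eq_zero.1 this with h' | h'
      · exact absurd (sub_eq_zero.1 h') hne
      · linear_combination h'
    exact hd.symm
  have hker : LinearMap.ker (g - c • f) = ⊤ := by
    refine Submodule.eq_top_of_forall_notMem_imp_mem (p := (K ∙ f x₁).comap f) ?_ fun x hx => ?_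
    · intro htop
      have hx₂ : x₂ ∈ (K ∙ f x₁).comap f := htop ▸ Submodule.mem_top
      exact hind (proportional_of_mem_span_singleton (Submodule.mem_span_singleton_self _) hx₂)
    · have hx' : ¬ Proportional (f x₁) (f x) := fun hp => hx (hp.mem_span_singleton hu)
      simp [hkey x hx']
  exact ⟨c, sub_eq_zero.1 (LinearMap.ker_eq_top.1 hker)⟩

theorem forall_mem_span_singleton_of_proportional {ι : Type*} {f : ι → V →ₗ[K] m → K}
    (hpair : ∀ x k l, Proportional (f k x) (f l x))
    (hrank : ∀ k x y, Proportional (f k x) (f k y)) {k₀ : ι} {x₀ : V} (h₀ : f k₀ x₀ ≠ 0)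
    (k : ι) (x : V) : f k x ∈ K ∙ f k₀ x₀ := by
  suffices (K ∙ f k₀ x₀).comap (f k) = ⊤ from Submodule.eq_top_iff'.1 this x
  refine Submodule.eq_top_of_forall_notMem_imp_mem (p := LinearMap.ker (f k₀))
    (fun htop => h₀ (LinearMap.ker_eq_top.1 htop ▸ rfl)) fun y hy => ?_
  have hfy : f k y ∈ K ∙ f k₀ y := (hpair y k₀ k).mem_span_singleton hy
  exact (Submodule.span_singleton_le_iff_mem _ _).2
    ((hrank k₀ x₀ y).mem_span_singleton h₀) hfy

end Proportional

section Matrix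

variable {K : Type*} [Field K]

theorem Matrix.exists_forall_col_mem_span_of_rank_le_one {m n : Type*} [Fintype n]
    [DecidableEq n] (W : Matrix m n K) (h : W.rank ≤ 1) :
    ∃ w : m → K, ∀ k, W.col k ∈ K ∙ w := by
  obtain ⟨⟨w, _⟩, hw⟩ :=
    finrank_le_one_iff.1 (h : Module.finrank K (LinearMap.range W.mulVecLin) ≤ 1)
  refine ⟨w, fun k => Submodule.mem_span_singleton.2 ?_⟩
  obtain ⟨c, hc⟩ := hw ⟨W *ᵥ Pi.single k 1, LinearMap.mem_range_self W.mulVecLin _⟩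
  exact ⟨c, by simpa [mulVec_single_one] using congrArg Subtype.val hc⟩

variable [PartialOrder K] [StarRing K] [StarOrderedRing K]

theorem exists_forall_mem_span_of_sum_vecMulVec_eq {ι m : Type*} [Fintype ι] [DecidableEq ι]
    [Fintype m] {v : ι → m → K} {φ : m → K}
    (h : ∑ k, vecMulVec (v k) (star (v k)) = vecMulVec φ (star φ)) :
    ∃ w : m → K, ∀ k, v k ∈ K ∙ w := by
  set W : Matrix m ι K := Matrix.of fun i k => v k i
  have hWW : W * Wᴴ = vecMulVec φ (star φ) := by
    rw [← h]
    ext i j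
    simp [W, Matrix.mul_apply, Matrix.sum_apply, vecMulVec_apply]
  have hrank : W.rank ≤ 1 := by
    rw [← rank_self_mul_conjTranspose, hWW]
    exact rank_vecMulVec_le _ _
  exact W.exists_forall_col_mem_span_of_rank_le_one hrank

theorem Matrix.card_le_card_of_conjTranspose_mul_self_eq_one {m n : Type*} [Fintype m]
    [Fintype n] [DecidableEq n] {U : Matrix m n K} (hU : Uᴴ * U = 1) :
    Fintype.card n ≤ Fintype.card m :=
  calc Fintype.card n = (Uᴴ * U).rank := by rw [hU, rank_one]
    _ = U.rank := rank_conjTranspose_mul_self U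
    _ ≤ Fintype.card m := rank_le_card_height U

end Matrix

theorem Matrix.vecMulVec_mul_mul_vecMulVec {l m n o R : Type*} [Fintype m] [Fintype n]
    [CommSemiring R] (u : l → R) (v : m → R) (X : Matrix m n R) (w : n → R) (x : o → R) :
    vecMulVec u v * X * vecMulVec w x = (v ⬝ᵥ X *ᵥ w) • vecMulVec u x := by
  rw [vecMulVec_mul, vecMulVec_mul_vecMulVec, vecMulVec_smul, dotProduct_mulVec]

theorem Matrix.eq_one_of_forall_trace_mul_eq {n R : Type*} [Fintype n] [DecidableEq n]
    [CommSemiring R] {M : Matrix n n R} (h : ∀ ρ, (M * ρ).trace = ρ.trace) : M = 1 := by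
  ext p q
  have hpq := h (single q p 1)
  rw [trace_mul_single, ← one_mul (single q p 1), trace_mul_single] at hpq
  simpa using hpq

theorem exists_eq_smul_normalized {n : Type*} [Fintype n] {ψ : n → ℂ} (hψ : ψ ≠ 0) :
    ∃ (c : ℂ) (ψ' : n → ℂ), star ψ' ⬝ᵥ ψ' = 1 ∧ ψ = c • ψ' := by
  obtain ⟨s, hs, hψs⟩ := RCLike.pos_iff_exists_ofReal.1 (dotProduct_star_self_pos_iff.2 hψ)
  replace hψs : (s : ℂ) = star ψ ⬝ᵥ ψ := hψs
  have hsqrt : ((√s : ℝ) : ℂ) ≠ 0 := by exact_mod_cast (Real.sqrt_pos.2 hs).ne'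
  refine ⟨√s, ((√s : ℝ) : ℂ)⁻¹ • ψ, ?_, by rw [smul_smul, mul_inv_cancel₀ hsqrt, one_smul]⟩
  rw [star_smul, smul_dotProduct, dotProduct_smul, ← hψs]
  simp only [star_inv₀, Complex.star_def, Complex.conj_ofReal, smul_eq_mul]
  field_simp
  exact_mod_cast (Real.sq_sqrt hs.le).symm

section Kraus

variable {n m ι : Type*} [Fintype n] [Fintype ι]

@[simp]
theorem krausMap_apply (A : ι → Matrix m n ℂ) (ρ : Matrix n n ℂ) :
    krausMap A ρ = ∑ k, A k * ρ * (A k)ᴴ := rfl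

theorem trace_krausMap [Fintype m] (A : ι → Matrix m n ℂ) (ρ : Matrix n n ℂ) :
    (krausMap A ρ).trace = ((∑ k, (A k)ᴴ * A k) * ρ).trace := by
  simp only [krausMap_apply, trace_sum, Finset.sum_mul]
  exact Finset.sum_congr rfl fun k _ => by rw [trace_mul_cycle, Matrix.mul_assoc]

theorem choi_injective [DecidableEq n] :
    Function.Injective (choi : (Matrix n n ℂ →ₗ[ℂ] Matrix m m ℂ) → _) := by
  intro Φ Ψ h
  refine Matrix.ext_linearMap ℂ fun p q => LinearMap.ext fun c => ?_
  have hpq : Φ (single p q 1) = Ψ (single p q 1) := by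
    ext r s
    exact congrFun (congrFun h (p, r)) (q, s)
  simp only [LinearMap.comp_apply, singleLinearMap_apply]
  rw [← mul_one c, ← smul_eq_mul, ← smul_single, map_smul, map_smul, hpq]

theorem exists_eq_krausMap_of_posSemidef_choi [DecidableEq n] [Fintype m] [DecidableEq m]
    {Φ : Matrix n n ℂ →ₗ[ℂ] Matrix m m ℂ} (h : (choi Φ).PosSemidef) :
    ∃ A : n × m → Matrix m n ℂ, Φ = krausMap A := by
  obtain ⟨B, hB⟩ : ∃ B : Matrix (n × m) (n × m) ℂ, choi Φ = Bᴴ * B := by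
    open scoped MatrixOrder Matrix.Norms.L2Operator in
    exact CStarAlgebra.nonneg_iff_eq_star_mul_self.mp h.nonneg
  refine ⟨fun k => of fun r p => star (B k (p, r)), choi_injective ?_⟩
  ext ⟨p, r⟩ ⟨q, s⟩
  rw [hB]
  simp [choi, single_eq_single_vecMulVec_single, mul_vecMulVec, vecMulVec_mul, Matrix.mul_apply,
    Matrix.sum_apply, vecMulVec_apply]

theorem IsCPTP.exists_isKrausRep [DecidableEq n] [Fintype m] [DecidableEq m]
    {Φ : Matrix n n ℂ →ₗ[ℂ] Matrix m m ℂ} (hΦ : IsCPTP Φ) :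
    ∃ A : n × m → Matrix m n ℂ, IsKrausRep A Φ := by
  obtain ⟨A, rfl⟩ := exists_eq_krausMap_of_posSemidef_choi hΦ.1
  exact ⟨A, fun ρ => rfl,
    eq_one_of_forall_trace_mul_eq fun ρ => (trace_krausMap A ρ).symm.trans (hΦ.2 ρ)⟩

theorem exists_forall_mulVec_mem_span_of_pure [Fintype m] [DecidableEq ι] {A : ι → Matrix m n ℂ}
    (hpure : ∀ ψ : n → ℂ, star ψ ⬝ᵥ ψ = 1 →
      ∃ φ : m → ℂ, krausMap A (vecMulVec ψ (star ψ)) = vecMulVec φ (star φ))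
    (ψ : n → ℂ) : ∃ w : m → ℂ, ∀ k, A k *ᵥ ψ ∈ ℂ ∙ w := by
  rcases eq_or_ne ψ 0 with rfl | hψ
  · exact ⟨0, fun k => by simp⟩
  obtain ⟨c, ψ, hψ₁, rfl⟩ := exists_eq_smul_normalized hψ
  obtain ⟨φ, hφ⟩ := hpure ψ hψ₁
  obtain ⟨w, hw⟩ := exists_forall_mem_span_of_sum_vecMulVec_eq (v := fun k => A k *ᵥ ψ) (φ := φ)
    (by simpa [mul_vecMulVec, vecMulVec_mul, star_mulVec] using hφ)
  exact ⟨w, fun k => by simpa [mulVec_smul] using Submodule.smul_mem _ c (hw k)⟩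

theorem exists_isometry_of_forall_eq_smul [DecidableEq n] [Fintype m] {A : ι → Matrix m n ℂ}
    {B : Matrix m n ℂ} {c : ι → ℂ} (hA : ∀ k, A k = c k • B) (hsum : ∑ k, (A k)ᴴ * A k = 1) :
    ∃ U : Matrix m n ℂ, Uᴴ * U = 1 ∧ ∀ ρ, krausMap A ρ = U * ρ * Uᴴ := by
  set t : ℂ := Complex.ofReal √(∑ k, ‖c k‖ ^ 2)
  have ht : star t * t = ∑ k, star (c k) * c k := by
    simp only [t, Complex.star_def, Complex.conj_ofReal, ← Complex.ofReal_mul,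
      Real.mul_self_sqrt (by positivity : 0 ≤ ∑ k, ‖c k‖ ^ 2), Complex.conj_mul',
      Complex.ofReal_sum, Complex.ofReal_pow]
  refine ⟨t • B, ?_, fun ρ => ?_⟩
  · rw [← hsum, conjTranspose_smul, Matrix.smul_mul, Matrix.mul_smul, smul_smul, ht,
      Finset.sum_smul]
    simp only [hA, conjTranspose_smul, Matrix.smul_mul, Matrix.mul_smul, smul_smul, mul_comm]
  · rw [conjTranspose_smul, Matrix.smul_mul, Matrix.smul_mul, Matrix.mul_smul, smul_smul,
      mul_comm, ht, Finset.sum_smul]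
    simp only [krausMap_apply, hA, conjTranspose_smul, Matrix.smul_mul, Matrix.mul_smul, smul_smul]

theorem krausMap_eq_trace_smul_of_forall_mulVec_mem_span [DecidableEq n] [Fintype m]
    {A : ι → Matrix m n ℂ} {φ : m → ℂ}
    (hφ : star φ ⬝ᵥ φ = 1) (hA : ∀ k x, A k *ᵥ x ∈ ℂ ∙ φ) (hsum : ∑ k, (A k)ᴴ * A k = 1)
    (ρ : Matrix n n ℂ) : krausMap A ρ = ρ.trace • vecMulVec φ (star φ) := by
  set P := vecMulVec φ (star φ)
  have hPA : ∀ k, P * A k = A k := fun k => ext_iff_mulVec.2 fun x => by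
    obtain ⟨c, hc⟩ := Submodule.mem_span_singleton.1 (hA k x)
    rw [← mulVec_mulVec, ← hc, mulVec_smul, vecMulVec_mulVec, hφ]
    simp
  have hAP : ∀ k, (A k)ᴴ * P = (A k)ᴴ := fun k => by
    simpa [P] using congrArg conjTranspose (hPA k)
  have hmem : krausMap A ρ ∈ ℂ ∙ P := by
    refine Submodule.sum_mem _ fun k _ => ?_
    have hPP : A k * ρ * (A k)ᴴ = P * (A k * ρ * (A k)ᴴ) * P := by
      simp only [← Matrix.mul_assoc, hPA k]
      simp only [Matrix.mul_assoc, hAP k]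
    rw [hPP, vecMulVec_mul_mul_vecMulVec]
    exact Submodule.smul_mem _ _ (Submodule.mem_span_singleton_self P)
  obtain ⟨s, hs⟩ := Submodule.mem_span_singleton.1 hmem
  have htr := trace_krausMap A ρ
  rw [hsum, Matrix.one_mul, ← hs, trace_smul, trace_vecMulVec, dotProduct_comm, hφ, smul_eq_mul,
    mul_one] at htr
  rw [← hs, htr]

end Kraus

/-- A CPTP map sending every pure state to a pure state is either
an isometry conjugation (so `d_A ≤ d_B`) or a constant map onto a fixed pure state. -/
theorem pure_to_pure_dichotomy {a b : ℕ}
    (Φ : Matrix (Fin a) (Fin a) ℂ →ₗ[ℂ] Matrix (Fin b) (Fin b) ℂ)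
    (hΦ : IsCPTP Φ)
    (hpure : ∀ ψ : Fin a → ℂ, star ψ ⬝ᵥ ψ = 1 →
      ∃ φ : Fin b → ℂ, star φ ⬝ᵥ φ = 1 ∧
        Φ (Matrix.vecMulVec ψ (star ψ)) = Matrix.vecMulVec φ (star φ)) :
    (∃ U : Matrix (Fin b) (Fin a) ℂ, a ≤ b ∧ Uᴴ * U = 1 ∧ ∀ ρ, Φ ρ = U * ρ * Uᴴ) ∨
    (∃ φ : Fin b → ℂ, star φ ⬝ᵥ φ = 1 ∧
      ∀ ρ, Φ ρ = ρ.trace • Matrix.vecMulVec φ (star φ)) := by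
  obtain ⟨A, hrep, hsum⟩ := hΦ.exists_isKrausRep
  obtain rfl : Φ = krausMap A := LinearMap.ext hrep
  have hpair : ∀ ψ k l, Proportional (A k *ᵥ ψ) (A l *ᵥ ψ) := fun ψ k l => by
    obtain ⟨w, hw⟩ := exists_forall_mulVec_mem_span_of_pure
      (fun ψ hψ => (hpure ψ hψ).imp fun _ => And.right) ψ
    exact proportional_of_mem_span_singleton (hw k) (hw l)
  by_cases hcol : ∃ B, ∀ k, ∃ c : ℂ, A k = c • B
  · obtain ⟨B, hB⟩ := hcol
    choose c hc using hB
    obtain ⟨U, hU, hΦU⟩ := exists_isometry_of_forall_eq_smul hc hsum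
    exact .inl ⟨U, by simpa using card_le_card_of_conjTranspose_mul_self_eq_one hU, hU, hΦU⟩
  · have hrank : ∀ k x y, Proportional (A k *ᵥ x) (A k *ᵥ y) := by
      refine fun k x y => by_contra fun hxy => hcol ⟨A k, fun l => ?_⟩
      obtain ⟨c, hc⟩ := eq_smul_of_forall_proportional (f := (A k).mulVecLin)
        (g := (A l).mulVecLin) (fun ψ => hpair ψ k l) hxy
      exact ⟨c, ext_iff_mulVec.2 fun ψ => by simpa [smul_mulVec] using LinearMap.congr_fun hc ψ⟩
    obtain ⟨k₀, x₀, h₀⟩ : ∃ k x, A k *ᵥ x ≠ 0 := by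
      by_contra! h0
      exact hcol ⟨0, fun k => ⟨0, ext_iff_mulVec.2 fun x => by simp [h0]⟩⟩
    obtain ⟨c, φ, hφ, hc⟩ := exists_eq_smul_normalized h₀
    have hspan : ∀ k x, A k *ᵥ x ∈ ℂ ∙ φ := fun k x => Submodule.span_singleton_smul_le ℂ c φ
      (hc ▸ forall_mem_span_singleton_of_proportional (f := fun k => (A k).mulVecLin)
        hpair hrank h₀ k x)
    exact .inr ⟨φ, hφ, krausMap_eq_trace_smul_of_forall_mulVec_mem_span hφ hspan hsum⟩
end

section
/- Let Φ: M_{d_A} → M_{d_B} be degradable with degrading map Ψ (Ψ∘Φ = Φ^C). For a pure state |ψ⟩ let B_ψ = range Φ(|ψ⟩⟨ψ|) and E_ψ = range Φ^C(|ψ⟩⟨ψ|). Then for any vector |φ⟩ ∈ B_ψ, the range of Ψ(|φ⟩⟨φ|) is contained in E_ψ. -/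
/-!
Write `M = Φ(|ψ⟩⟨ψ|)` and `φ = M x`. Cauchy–Schwarz for the semi-inner product defined by `M`
gives `|φ⟩⟨φ| ≤ ⟨x, M x⟩ • M`. Since `Ψ` is positive (its Choi matrix is), applying it yields
`Ψ(|φ⟩⟨φ|) ≤ ⟨x, M x⟩ • Ψ(M) = ⟨x, M x⟩ • Φ^C(|ψ⟩⟨ψ|)`. Finally `0 ≤ P ≤ c • Q` forces
`ker Q ⊆ ker P`, hence `range P ⊆ range Q = (ker Q)ᗮ`.
-/

open Matrix Kronecker BigOperators ComplexOrder

namespace Matrix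

lemma IsHermitian.mem_range_mulVecLin_iff {𝕜 n : Type*} [RCLike 𝕜] [Fintype n] [DecidableEq n]
    {Q : Matrix n n 𝕜} (hQ : Q.IsHermitian) {y : n → 𝕜} :
    y ∈ LinearMap.range Q.mulVecLin ↔ ∀ z, Q *ᵥ z = 0 → star z ⬝ᵥ y = 0 := by
  have hrange : LinearMap.range (toEuclideanLin Q) = (LinearMap.ker (toEuclideanLin Q))ᗮ := by
    rw [← (isSymmetric_toEuclideanLin_iff.mpr hQ).orthogonal_range,
      Submodule.orthogonal_orthogonal]
  calc y ∈ LinearMap.range Q.mulVecLin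
        ↔ WithLp.toLp 2 y ∈ LinearMap.range (toEuclideanLin Q) := by
        simpa [toLpLin_apply] using
          ((WithLp.equiv 2 (n → 𝕜)).exists_congr_left (p := fun x => Q *ᵥ x.ofLp = y)).symm
    _ ↔ _ := by
        rw [hrange, Submodule.mem_orthogonal]
        simpa [EuclideanSpace.inner_eq_star_dotProduct, toLpLin_apply, dotProduct_comm] using
          (WithLp.equiv 2 (n → 𝕜)).forall_congr_left

variable {n : Type*} [Fintype n]

lemma range_mulVecLin_le_of_posSemidef_smul_sub [DecidableEq n] {P Q : Matrix n n ℂ} {c : ℂ}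
    (hP : P.PosSemidef) (hQ : Q.IsHermitian) (hPQ : (c • Q - P).PosSemidef) :
    LinearMap.range P.mulVecLin ≤ LinearMap.range Q.mulVecLin := by
  rintro _ ⟨x, rfl⟩
  rw [hQ.mem_range_mulVecLin_iff]
  intro z hz
  have hPz : star z ⬝ᵥ P *ᵥ z = 0 := by
    have h := hPQ.dotProduct_mulVec_nonneg z
    rw [sub_mulVec, dotProduct_sub, smul_mulVec, hz, smul_zero, dotProduct_zero, zero_sub,
      neg_nonneg] at h
    exact le_antisymm h (hP.dotProduct_mulVec_nonneg z)
  rw [mulVecLin_apply, dotProduct_mulVec, ← hP.isHermitian.eq, ← star_mulVec,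
    (hP.dotProduct_mulVec_zero_iff z).1 hPz, star_zero, zero_dotProduct]

lemma PosSemidef.dotProduct_mulVec_mul_le {M : Matrix n n ℂ} (hM : M.PosSemidef) (x y : n → ℂ) :
    (star x ⬝ᵥ M *ᵥ y) * (star y ⬝ᵥ M *ᵥ x) ≤ (star x ⬝ᵥ M *ᵥ x) * (star y ⬝ᵥ M *ᵥ y) := by
  let := M.toSeminormedAddCommGroup hM
  let := M.toInnerProductSpace hM
  have hinner (u v : n → ℂ) : star u ⬝ᵥ M *ᵥ v = inner ℂ u v := dotProduct_comm _ _
  rw [hinner, hinner, hinner, hinner, ← inner_conj_symm x y, Complex.conj_mul',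
    ← inner_self_ofReal_re x, ← inner_self_ofReal_re y, RCLike.ofReal_eq_complex_ofReal,
    ← Complex.ofReal_pow, ← Complex.ofReal_mul, Complex.real_le_real, sq]
  simpa only [norm_inner_symm x y] using inner_mul_inner_self_le (𝕜 := ℂ) x y

lemma PosSemidef.posSemidef_smul_sub_vecMulVec_mulVec {M : Matrix n n ℂ} (hM : M.PosSemidef)
    (x : n → ℂ) :
    ((star x ⬝ᵥ M *ᵥ x) • M - vecMulVec (M *ᵥ x) (star (M *ᵥ x))).PosSemidef := by
  refine .of_dotProduct_mulVec_nonneg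
    ((hM.smul (hM.dotProduct_mulVec_nonneg x)).isHermitian.sub
      (posSemidef_vecMulVec_self_star _).isHermitian) fun v => ?_
  have hstar : star (M *ᵥ x) ⬝ᵥ v = star x ⬝ᵥ M *ᵥ v := by
    rw [star_mulVec, hM.isHermitian.eq, dotProduct_mulVec]
  rw [sub_mulVec, dotProduct_sub, smul_mulVec, dotProduct_smul, vecMulVec_mulVec, hstar]
  simp only [op_smul_eq_smul, dotProduct_smul, smul_eq_mul, sub_nonneg]
  rw [mul_comm, mul_comm (star x ⬝ᵥ M *ᵥ x)]
  exact hM.dotProduct_mulVec_mul_le v x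

end Matrix

lemma posSemidef_krausMap_apply {n m ι : Type*} [Fintype n] [Fintype m] [Fintype ι]
    (A : ι → Matrix m n ℂ) {ρ : Matrix n n ℂ} (hρ : ρ.PosSemidef) :
    (krausMap A ρ).PosSemidef :=
  posSemidef_sum _ fun k _ => hρ.mul_mul_conjTranspose_same (A k)

lemma map_apply_eq_sum_choi {n m : Type*} [Fintype n] [DecidableEq n]
    (Ψ : Matrix n n ℂ →ₗ[ℂ] Matrix m m ℂ) (X : Matrix n n ℂ) (i j : m) :
    Ψ X i j = ∑ p, ∑ q, X p q * choi Ψ (p, i) (q, j) := by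
  conv_lhs => rw [matrix_eq_sum_single X]
  simp only [map_sum, Matrix.sum_apply]
  refine Finset.sum_congr rfl fun p _ => Finset.sum_congr rfl fun q _ => ?_
  rw [show single p q (X p q) = X p q • single p q 1 by rw [smul_single, smul_eq_mul, mul_one],
    map_smul, Matrix.smul_apply, smul_eq_mul]
  rfl

lemma posSemidef_map_of_posSemidef_choi {n m : Type*} [Fintype n] [DecidableEq n] [Fintype m]
    {Ψ : Matrix n n ℂ →ₗ[ℂ] Matrix m m ℂ} (hΨ : (choi Ψ).PosSemidef)
    {X : Matrix n n ℂ} (hX : X.PosSemidef) : (Ψ X).PosSemidef := by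
  classical
  have hrankOne (w : n → ℂ) : (Ψ (vecMulVec w (star w))).PosSemidef := by
    -- `K = |w̄⟩ ⊗ 1` compresses the Choi matrix to `Ψ(|w⟩⟨w|)`
    let K : Matrix (n × m) m ℂ := of fun p j => star (w p.1) * (1 : Matrix m m ℂ) p.2 j
    have hK : Ψ (vecMulVec w (star w)) = Kᴴ * choi Ψ * K := by
      ext i j
      simp only [K, map_apply_eq_sum_choi, vecMulVec_apply, Pi.star_apply, RCLike.star_def,
        one_apply, apply_ite, mul_one, mul_zero, mul_apply, conjTranspose_apply, of_apply,
        RingHomCompTriple.comp_apply, RingHom.id_apply, star_zero, ite_mul, zero_mul,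
        Fintype.sum_prod_type, Finset.sum_ite_eq', Finset.mem_univ, if_true, Finset.sum_mul]
      rw [Finset.sum_comm]
      simp only [mul_right_comm]
    exact hK ▸ hΨ.conjTranspose_mul_mul_same K
  obtain ⟨r, v, rfl⟩ := posSemidef_iff_eq_sum_vecMulVec.mp hX
  rw [map_sum]
  exact posSemidef_sum _ fun i _ => hrankOne (v i)

theorem degrading_map_range_lemma_general {a b e : ℕ}
    (A : Fin e → Matrix (Fin b) (Fin a) ℂ)
    (Ψ : Matrix (Fin b) (Fin b) ℂ →ₗ[ℂ] Matrix (Fin e) (Fin e) ℂ)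
    (hΨ : IsCPTP Ψ) (hdeg : Ψ ∘ₗ krausMap A = complementMap A)
    (ψ : Fin a → ℂ)
    (φ : Fin b → ℂ)
    (hφ : φ ∈ LinearMap.range (krausMap A (Matrix.vecMulVec ψ (star ψ))).mulVecLin) :
    LinearMap.range (Ψ (Matrix.vecMulVec φ (star φ))).mulVecLin ≤
      LinearMap.range (complementMap A (Matrix.vecMulVec ψ (star ψ))).mulVecLin := by
  obtain ⟨x, rfl⟩ := hφ
  set M := krausMap A (vecMulVec ψ (star ψ))
  have hΨpos {X} : X.PosSemidef → (Ψ X).PosSemidef := posSemidef_map_of_posSemidef_choi hΨ.1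
  have hM : M.PosSemidef := posSemidef_krausMap_apply A (posSemidef_vecMulVec_self_star ψ)
  have hcomp : complementMap A (vecMulVec ψ (star ψ)) = Ψ M := by rw [← hdeg]; rfl
  have hdom := hΨpos (hM.posSemidef_smul_sub_vecMulVec_mulVec x)
  rw [map_sub, map_smul] at hdom
  rw [mulVecLin_apply, hcomp]
  exact range_mulVecLin_le_of_posSemidef_smul_sub (hΨpos (posSemidef_vecMulVec_self_star _))
    (hΨpos hM).isHermitian hdom

/-- if `Ψ` degrades `Φ` to its complement, then for any pure input `ψ`
and any vector `φ` in the range of `Φ(|ψ⟩⟨ψ|)`, the range of `Ψ(|φ⟩⟨φ|)` is contained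
in the range of `Φ^C(|ψ⟩⟨ψ|)`. -/
theorem degrading_map_range_lemma {a b e : ℕ}
    (A : Fin e → Matrix (Fin b) (Fin a) ℂ)
    (hTP : ∑ k, (A k)ᴴ * A k = 1)
    (Ψ : Matrix (Fin b) (Fin b) ℂ →ₗ[ℂ] Matrix (Fin e) (Fin e) ℂ)
    (hΨ : IsCPTP Ψ) (hdeg : Ψ ∘ₗ krausMap A = complementMap A)
    (ψ : Fin a → ℂ) (hψ : star ψ ⬝ᵥ ψ = 1)
    (φ : Fin b → ℂ)
    (hφ : φ ∈ LinearMap.range (krausMap A (Matrix.vecMulVec ψ (star ψ))).mulVecLin) :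
    LinearMap.range (Ψ (Matrix.vecMulVec φ (star φ))).mulVecLin ≤
      LinearMap.range (complementMap A (Matrix.vecMulVec ψ (star ψ))).mulVecLin :=
  degrading_map_range_lemma_general A Ψ hΨ hdeg ψ φ hφ
end

section
/- If Φ: M_{d_A} → M_3 is a degradable CPT map with qutrit output, then its Choi rank is at most 3. -/
open Matrix Kronecker BigOperators ComplexOrder

/-!
Write `Φ ρ = ∑ j, A j * ρ * (A j)ᴴ` and, for an input vector `u`, let `M u : ℂ^e → ℂ³`
(`stinespringMap A u`) send `z` to `∑ j, z j • A j u`. The Choi matrix of `Φ` is `B * Bᴴ`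
(`B = choiFactor A`) with `ker B = ⋂ u, ker (M u)`, so its rank is `e - dim ⋂ u, ker (M u)`.

If `Ψ` degrades `Φ`, then `‖M u z‖² = z̄ᴴ Φᶜ(u uᴴ) z̄ = ∑ j, z̄ᴴ Ψ((A j u)(A j u)ᴴ) z̄`, and each
summand is a positive semidefinite form in `A j u` whose null vectors form a subspace `V z`
(`choiNullSpace Ψ z̄`). Hence `M u z = 0` iff `range (M u) ≤ V z`: once `z` is killed by maps
`M c` whose ranges together contain every `range (M u)`, it lies in `ker B`.

In `ℂ³` such a family can always be found with `dim ⋂ ker (M c) ≥ e - 3`: a single `M c` whose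
range contains all others; otherwise two maps of rank two whose sum still has rank at most two,
which forces their kernels to meet in codimension at most three; otherwise at most three maps
of rank one. So `rank B ≤ 3`.
-/

open LinearMap Module

section FinrankBounds

variable {K E F : Type*} [Field K] [AddCommGroup E] [Module K E] [FiniteDimensional K E]
  [AddCommGroup F] [Module K F]

theorem Submodule.finrank_map_add_finrank_inf_ker (f : E →ₗ[K] F) (W : Submodule K E) :
    finrank K (W.map f) + finrank K ↥(W ⊓ ker f) = finrank K W := by
  rw [← Submodule.map_comap_subtype, Submodule.finrank_map_subtype_eq, ← range_domRestrict,
    ← ker_domRestrict, finrank_range_add_finrank_ker]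

theorem finrank_le_finrank_iInf_ker_add_sum_finrank_range {ι : Type*} (f : ι → E →ₗ[K] F)
    (s : Finset ι) :
    finrank K E ≤ finrank K ↥(⨅ i ∈ s, ker (f i)) + ∑ i ∈ s, finrank K (range (f i)) := by
  classical
  induction s using Finset.induction_on with
  | empty =>
    rw [show (⨅ i ∈ (∅ : Finset ι), ker (f i)) = ⊤ by simp, finrank_top]
    simp
  | insert i s hi ih =>
    have h := Submodule.finrank_map_add_finrank_inf_ker (f i) (⨅ j ∈ s, ker (f j))
    have hmap := Submodule.finrank_mono (LinearMap.map_le_range (f := f i)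
      (p := ⨅ j ∈ s, ker (f j)))
    rw [Finset.iInf_insert, Finset.sum_insert hi, inf_comm]
    omega

theorem range_le_range_add_of_finrank_le (f g : E →ₗ[K] F)
    (h : finrank K (range f) + finrank K (range g) + finrank K ↥(ker f ⊓ ker g) ≤
      finrank K E) :
    range f ≤ range (f + g) := by
  -- `f` and `f + g` agree on `ker g`, and `h` makes `f` map `ker g` onto `range f`.
  have hg := finrank_range_add_finrank_ker g
  have hfg := Submodule.finrank_map_add_finrank_inf_ker f (ker g)
  rw [inf_comm] at hfg
  have hmap : (ker g).map f = range f :=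
    Submodule.eq_of_le_of_finrank_le (LinearMap.map_le_range) (by omega)
  rw [← hmap]
  rintro _ ⟨x, hx, rfl⟩
  exact ⟨x, by simp [mem_ker.mp hx]⟩

theorem finrank_lt_of_finrank_range_add_lt_finrank_sup (f g : E →ₗ[K] F)
    (h : finrank K (range (f + g)) < finrank K ↥(range f ⊔ range g)) :
    finrank K E < finrank K (range f) + finrank K (range g) + finrank K ↥(ker f ⊓ ker g) := by
  by_contra! hle
  have hf := range_le_range_add_of_finrank_le f g (by omega)
  have hg := range_le_range_add_of_finrank_le g f (by rw [inf_comm]; omega)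
  rw [add_comm] at hg
  exact h.not_ge (Submodule.finrank_mono (sup_le hf hg))

end FinrankBounds

theorem Submodule.exists_finset_card_le_finrank_forall_le_iSup {K F ι : Type*} [Field K]
    [AddCommGroup F] [Module K F] [FiniteDimensional K F] (U : ι → Submodule K F) :
    ∃ s : Finset ι, s.card ≤ finrank K F ∧ ∀ i, U i ≤ ⨆ j ∈ s, U j := by
  classical
  suffices h : ∀ k, ∃ s : Finset ι, s.card ≤ k ∧
      ((∀ i, U i ≤ ⨆ j ∈ s, U j) ∨ k ≤ finrank K ↥(⨆ j ∈ s, U j)) by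
    obtain ⟨s, hs, hcover | hdim⟩ := h (finrank K F)
    · exact ⟨s, hs, hcover⟩
    · refine ⟨s, hs, fun i => ?_⟩
      rw [Submodule.eq_top_of_finrank_eq (hdim.antisymm' (Submodule.finrank_le _))]
      exact le_top
  intro k
  induction k with
  | zero => exact ⟨∅, by simp⟩
  | succ k ih =>
    obtain ⟨s, hs, hcover | hdim⟩ := ih
    · exact ⟨s, by omega, Or.inl hcover⟩
    by_cases hcover : ∀ i, U i ≤ ⨆ j ∈ s, U j
    · exact ⟨s, by omega, Or.inl hcover⟩
    push Not at hcover
    obtain ⟨i, hi⟩ := hcover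
    refine ⟨insert i s, (Finset.card_insert_le i s).trans (by omega), Or.inr ?_⟩
    rw [Finset.iSup_insert]
    exact hdim.trans_lt (Submodule.finrank_lt_finrank_of_lt (right_lt_sup.mpr hi))

theorem exists_finset_forall_range_le_iSup_of_finrank_eq_three {K V E F : Type*} [Field K]
    [AddCommGroup V] [Module K V] [AddCommGroup E] [Module K E] [FiniteDimensional K E]
    [AddCommGroup F] [Module K F] [FiniteDimensional K F]
    (M : V →ₗ[K] E →ₗ[K] F) (hF : finrank K F = 3) :
    ∃ s : Finset V, (∀ v, range (M v) ≤ ⨆ c ∈ s, range (M c)) ∧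
      finrank K E ≤ finrank K ↥(⨅ c ∈ s, ker (M c)) + 3 := by
  classical
  have hrange_le (v : V) : finrank K (range (M v)) ≤ 3 := hF ▸ Submodule.finrank_le _
  by_cases hdom : ∃ c, ∀ v, range (M v) ≤ range (M c)
  · obtain ⟨c, hc⟩ := hdom
    refine ⟨{c}, by simpa using hc, ?_⟩
    have := finrank_le_finrank_iInf_ker_add_sum_finrank_range M {c}
    rw [Finset.sum_singleton] at this
    linarith [hrange_le c]
  push Not at hdom
  have hrank_le_two (c : V) : finrank K (range (M c)) ≤ 2 := by
    by_contra! h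
    have htop : range (M c) = ⊤ :=
      Submodule.eq_top_of_finrank_eq (by have := hrange_le c; omega)
    obtain ⟨v, hv⟩ := hdom c
    exact hv (htop ▸ le_top)
  by_cases hrank : ∃ c, 2 ≤ finrank K (range (M c))
  · obtain ⟨c, hc⟩ := hrank
    obtain ⟨c', hc'⟩ := hdom c
    have hsup : range (M c) ⊔ range (M c') = ⊤ := by
      have := Submodule.finrank_lt_finrank_of_lt (left_lt_sup.mpr hc')
      exact Submodule.eq_top_of_finrank_eq (le_antisymm (Submodule.finrank_le _) (by omega))
    refine ⟨{c, c'}, fun v => ?_, ?_⟩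
    · rw [Finset.iSup_insert, Finset.iSup_singleton, hsup]
      exact le_top
    have := finrank_lt_of_finrank_range_add_lt_finrank_sup (M c) (M c')
      (by rw [← map_add, hsup, finrank_top]; linarith [hrank_le_two (c + c')])
    rw [Finset.iInf_insert, Finset.iInf_singleton]
    linarith [hrank_le_two c, hrank_le_two c']
  · push Not at hrank
    obtain ⟨s, hcard, hcover⟩ :=
      Submodule.exists_finset_card_le_finrank_forall_le_iSup fun v => range (M v)
    refine ⟨s, hcover, ?_⟩
    have hsum : ∑ c ∈ s, finrank K (range (M c)) ≤ s.card := by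
      simpa using Finset.sum_le_sum fun c _ => Nat.lt_succ_iff.mp (hrank c)
    linarith [finrank_le_finrank_iInf_ker_add_sum_finrank_range M s]

theorem apply_apply_eq_sum_choi {m ι : Type*} [Fintype m] [DecidableEq m]
    (Ψ : Matrix m m ℂ →ₗ[ℂ] Matrix ι ι ℂ) (X : Matrix m m ℂ) (k j : ι) :
    Ψ X k j = ∑ b, ∑ c, X b c * choi Ψ (b, k) (c, j) := by
  conv_lhs => rw [Matrix.matrix_eq_sum_single X]
  simp only [map_sum, Matrix.sum_apply]
  refine Finset.sum_congr rfl fun b _ => Finset.sum_congr rfl fun c _ => ?_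
  rw [show Matrix.single b c (X b c) = X b c • Matrix.single b c 1 by simp [Matrix.smul_single],
    map_smul]
  rfl

section Kraus

variable {n m ι : Type*} [Fintype n] [Fintype ι]

/-- `stinespringMap A u z = ∑ j, z j • A j *ᵥ u`: the Stinespring image `∑ j, A j u ⊗ eⱼ` of `u`,
read as a map from the environment `ι → ℂ` to the output `m → ℂ`. -/
noncomputable def stinespringMap (A : ι → Matrix m n ℂ) :
    (n → ℂ) →ₗ[ℂ] (ι → ℂ) →ₗ[ℂ] m → ℂ :=
  (Matrix.mulVecBilin ℂ ℂ ∘ₗ Fintype.linearCombination ℂ A).flip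

theorem stinespringMap_apply (A : ι → Matrix m n ℂ) (u : n → ℂ) :
    stinespringMap A u = Fintype.linearCombination ℂ fun j => A j *ᵥ u := by
  ext z
  simp [stinespringMap, Fintype.linearCombination_apply]

theorem range_stinespringMap (A : ι → Matrix m n ℂ) (u : n → ℂ) :
    range (stinespringMap A u) = Submodule.span ℂ (Set.range fun j => A j *ᵥ u) := by
  rw [stinespringMap_apply, Fintype.range_linearCombination]

noncomputable def choiFactor (A : ι → Matrix m n ℂ) : Matrix (n × m) ι ℂ :=
  Matrix.of fun p j => A j p.2 p.1

theorem choiFactor_mulVec_apply [DecidableEq n] (A : ι → Matrix m n ℂ) (z : ι → ℂ) (p : n)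
    (b : m) : (choiFactor A *ᵥ z) (p, b) = stinespringMap A (Pi.single p 1) z b := by
  simp [stinespringMap_apply, Fintype.linearCombination_apply, choiFactor, Matrix.mulVec,
    dotProduct, Finset.sum_apply, mul_comm]

theorem choi_eq_choiFactor_mul_conjTranspose [DecidableEq n] (A : ι → Matrix m n ℂ)
    {Φ : Matrix n n ℂ →ₗ[ℂ] Matrix m m ℂ} (hΦ : ∀ ρ, Φ ρ = ∑ k, A k * ρ * (A k)ᴴ) :
    choi Φ = choiFactor A * (choiFactor A)ᴴ := by
  ext ⟨p, b⟩ ⟨q, c⟩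
  simp [choi, hΦ, choiFactor, Matrix.mul_apply, Matrix.sum_apply, Matrix.single_apply, ite_and,
    Finset.sum_ite_eq]

theorem apply_vecMulVec_of_kraus (A : ι → Matrix m n ℂ) {Φ : Matrix n n ℂ →ₗ[ℂ] Matrix m m ℂ}
    (hΦ : ∀ ρ, Φ ρ = ∑ k, A k * ρ * (A k)ᴴ) (u : n → ℂ) :
    Φ (vecMulVec u (star u)) = ∑ j, vecMulVec (A j *ᵥ u) (star (A j *ᵥ u)) := by
  simp [hΦ, Matrix.mul_vecMulVec, Matrix.vecMulVec_mul, Matrix.star_mulVec]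

theorem stinespringMap_apply_eq_vecMul (A : ι → Matrix m n ℂ) (u : n → ℂ) (z : ι → ℂ) :
    stinespringMap A u z = z ᵥ* Matrix.of fun j => A j *ᵥ u := by
  ext b
  simp [stinespringMap_apply, Fintype.linearCombination_apply, Matrix.vecMul, dotProduct]

theorem complementMap_vecMulVec [Fintype m] (A : ι → Matrix m n ℂ) (u : n → ℂ) :
    complementMap A (vecMulVec u (star u)) =
      (Matrix.of fun j => A j *ᵥ u) * (Matrix.of fun j => A j *ᵥ u)ᴴ := by
  ext j k
  simp [complementMap, Matrix.mul_vecMulVec, Matrix.vecMulVec_mul, ← Matrix.star_mulVec,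
    Matrix.trace_vecMulVec, Matrix.mul_apply, dotProduct]

theorem dotProduct_complementMap_vecMulVec_mulVec [Fintype m] (A : ι → Matrix m n ℂ)
    (u : n → ℂ) (z : ι → ℂ) :
    z ⬝ᵥ complementMap A (vecMulVec u (star u)) *ᵥ star z =
      stinespringMap A u z ⬝ᵥ star (stinespringMap A u z) := by
  rw [complementMap_vecMulVec, stinespringMap_apply_eq_vecMul, Matrix.star_vecMul,
    ← Matrix.mulVec_mulVec, Matrix.dotProduct_mulVec]

theorem dotProduct_apply_vecMulVec_mulVec [Fintype m] [DecidableEq m]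
    (Ψ : Matrix m m ℂ →ₗ[ℂ] Matrix ι ι ℂ) (x : m → ℂ) (ζ : ι → ℂ) :
    star ζ ⬝ᵥ Ψ (vecMulVec x (star x)) *ᵥ ζ =
      star (fun p : m × ι => star (x p.1) * ζ p.2) ⬝ᵥ
        choi Ψ *ᵥ fun p : m × ι => star (x p.1) * ζ p.2 := by
  simp only [dotProduct, Matrix.mulVec, apply_apply_eq_sum_choi, Fintype.sum_prod_type,
    vecMulVec_apply, Finset.mul_sum, Finset.sum_mul, Pi.star_apply, star_mul', star_star]
  calc _ = ∑ k, ∑ b, ∑ c, ∑ j,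
        star (ζ k) * (x b * star (x c) * choi Ψ (b, k) (c, j) * ζ j) :=
        Finset.sum_congr rfl fun k _ => by
          rw [Finset.sum_comm]
          exact Finset.sum_congr rfl fun b _ => Finset.sum_comm
    _ = _ := by
        rw [Finset.sum_comm]
        refine Finset.sum_congr rfl fun b _ => Finset.sum_congr rfl fun k _ =>
          Finset.sum_congr rfl fun c _ => Finset.sum_congr rfl fun j _ => by ring

end Kraus

section Degradable

variable {n m ι : Type*} [Fintype n] [Fintype m] [DecidableEq m] [Fintype ι]

/-- For completely positive `Ψ`, the vectors `x` with `star ζ ⬝ᵥ Ψ (x xᴴ) *ᵥ ζ = 0`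
(`dotProduct_apply_vecMulVec_mulVec`); written through the Choi matrix, this set is visibly a
subspace. -/
def choiNullSpace (Ψ : Matrix m m ℂ →ₗ[ℂ] Matrix ι ι ℂ) (ζ : ι → ℂ) : Submodule ℂ (m → ℂ) where
  carrier := {x | choi Ψ *ᵥ (fun p : m × ι => star (x p.1) * ζ p.2) = 0}
  add_mem' {x y} hx hy := by
    have hv : (fun p : m × ι => star ((x + y) p.1) * ζ p.2) =
        (fun p : m × ι => star (x p.1) * ζ p.2) + fun p : m × ι => star (y p.1) * ζ p.2 := by
      ext p; simp [add_mul]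
    change choi Ψ *ᵥ _ = 0
    rw [hv, Matrix.mulVec_add, hx, hy, add_zero]
  zero_mem' := by
    change choi Ψ *ᵥ _ = 0
    convert Matrix.mulVec_zero (choi Ψ)
    simp
  smul_mem' c x hx := by
    have hv : (fun p : m × ι => star ((c • x) p.1) * ζ p.2) =
        star c • fun p : m × ι => star (x p.1) * ζ p.2 := by
      ext p; simp [mul_assoc]
    change choi Ψ *ᵥ _ = 0
    rw [hv, Matrix.mulVec_smul, hx, smul_zero]

theorem stinespringMap_eq_zero_iff_range_le_choiNullSpace {A : ι → Matrix m n ℂ}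
    {Φ : Matrix n n ℂ →ₗ[ℂ] Matrix m m ℂ} {Ψ : Matrix m m ℂ →ₗ[ℂ] Matrix ι ι ℂ}
    (hΦ : ∀ ρ, Φ ρ = ∑ k, A k * ρ * (A k)ᴴ) (hΨ : (choi Ψ).PosSemidef)
    (hdeg : Ψ ∘ₗ Φ = complementMap A) (u : n → ℂ) (z : ι → ℂ) :
    stinespringMap A u z = 0 ↔ range (stinespringMap A u) ≤ choiNullSpace Ψ (star z) := by
  set v : (m → ℂ) → m × ι → ℂ := fun x p => star (x p.1) * star z p.2
  have key : stinespringMap A u z ⬝ᵥ star (stinespringMap A u z) =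
      ∑ j, star (v (A j *ᵥ u)) ⬝ᵥ choi Ψ *ᵥ v (A j *ᵥ u) := by
    rw [← dotProduct_complementMap_vecMulVec_mulVec, ← hdeg, LinearMap.comp_apply,
      apply_vecMulVec_of_kraus A hΦ, map_sum, Matrix.sum_mulVec, dotProduct_sum]
    refine Finset.sum_congr rfl fun j _ => ?_
    rw [← dotProduct_apply_vecMulVec_mulVec, star_star]
  rw [range_stinespringMap, Submodule.span_le, Set.range_subset_iff,
    ← dotProduct_self_star_eq_zero, key,
    Finset.sum_eq_zero_iff_of_nonneg fun j _ => hΨ.dotProduct_mulVec_nonneg _]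
  simp only [Finset.mem_univ, true_implies, hΨ.dotProduct_mulVec_zero_iff]
  rfl

theorem iInf_ker_stinespringMap_le_ker_choiFactor [DecidableEq n] {A : ι → Matrix m n ℂ}
    {Φ : Matrix n n ℂ →ₗ[ℂ] Matrix m m ℂ} {Ψ : Matrix m m ℂ →ₗ[ℂ] Matrix ι ι ℂ}
    (hΦ : ∀ ρ, Φ ρ = ∑ k, A k * ρ * (A k)ᴴ) (hΨ : (choi Ψ).PosSemidef)
    (hdeg : Ψ ∘ₗ Φ = complementMap A) {s : Finset (n → ℂ)}
    (hs : ∀ u, range (stinespringMap A u) ≤ ⨆ c ∈ s, range (stinespringMap A c)) :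
    ⨅ c ∈ s, ker (stinespringMap A c) ≤ ker (choiFactor A).mulVecLin := by
  intro z hz
  simp only [Submodule.mem_iInf, mem_ker] at hz
  have hzero (u : n → ℂ) : stinespringMap A u z = 0 :=
    (stinespringMap_eq_zero_iff_range_le_choiNullSpace hΦ hΨ hdeg u z).mpr <| (hs u).trans <|
      iSup₂_le fun c hc =>
        (stinespringMap_eq_zero_iff_range_le_choiNullSpace hΦ hΨ hdeg c z).mp (hz c hc)
  rw [mem_ker, Matrix.mulVecLin_apply]
  ext ⟨p, b⟩
  rw [choiFactor_mulVec_apply, hzero]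
  rfl

end Degradable

theorem degradable_qutrit_output_choiRank_general {a : ℕ}
    (Φ : Matrix (Fin a) (Fin a) ℂ →ₗ[ℂ] Matrix (Fin 3) (Fin 3) ℂ)
    (hdeg : Degradable Φ) :
    (choi Φ).rank ≤ 3 := by
  obtain ⟨e, A, ⟨hΦ, -⟩, Ψ, ⟨hΨ, -⟩, hcomp⟩ := hdeg
  obtain ⟨s, hcover, hdim⟩ :=
    exists_finset_forall_range_le_iSup_of_finrank_eq_three (stinespringMap A) (by simp)
  have hker := Submodule.finrank_mono
    (iInf_ker_stinespringMap_le_ker_choiFactor hΦ hΨ hcomp hcover)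
  have hrank := finrank_range_add_finrank_ker (choiFactor A).mulVecLin
  rw [choi_eq_choiFactor_mul_conjTranspose A hΦ, Matrix.rank_self_mul_conjTranspose]
  simp only [finrank_fin_fun] at hdim hrank
  change finrank ℂ (range (choiFactor A).mulVecLin) ≤ 3
  omega

/-- a degradable channel with qutrit output has Choi rank at most 3. -/
theorem degradable_qutrit_output_choiRank {a : ℕ}
    (Φ : Matrix (Fin a) (Fin a) ℂ →ₗ[ℂ] Matrix (Fin 3) (Fin 3) ℂ)
    (hΦ : IsCPTP Φ) (hdeg : Degradable Φ) :
    (choi Φ).rank ≤ 3 :=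
  degradable_qutrit_output_choiRank_general Φ hdeg
end

section
/- The channel Φ: M_3 → M_2 with Kraus operators A_0 = [[1,0,0],[0,1/√2,0]] and A_1 = [[0,1/√2,0],[0,0,1]] satisfies Φ = Φ^C (with the complementary channel computed via (Φ^C(ρ))_{jk} = Tr A_j ρ A_k†), and hence is both degradable and anti-degradable with degrading map the identity. -/
open Matrix Kronecker BigOperators ComplexOrder

theorem choi_id (m : Type*) [Fintype m] [DecidableEq m] :
    choi (LinearMap.id : Matrix m m ℂ →ₗ[ℂ] Matrix m m ℂ) =
      vecMulVec (fun p : m × m => if p.1 = p.2 then 1 else 0)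
        (star fun p : m × m => if p.1 = p.2 then 1 else 0) := by
  ext p q
  simp only [choi, LinearMap.id_apply, of_apply, single_apply, vecMulVec_apply, Pi.star_apply]
  split_ifs <;> simp_all

theorem isCPTP_id (m : Type*) [Fintype m] [DecidableEq m] :
    IsCPTP (LinearMap.id : Matrix m m ℂ →ₗ[ℂ] Matrix m m ℂ) :=
  ⟨choi_id m ▸ posSemidef_vecMulVec_self_star _, fun _ => rfl⟩

section SelfComplementary

variable {n : Type*} [Fintype n] [DecidableEq n] {e : ℕ} {A : Fin e → Matrix (Fin e) n ℂ}

theorem isKrausRep_krausMap (hA : ∑ k, (A k)ᴴ * A k = 1) : IsKrausRep A (krausMap A) :=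
  ⟨fun _ => rfl, hA⟩

theorem degradable_of_complementMap_eq_krausMap (hA : ∑ k, (A k)ᴴ * A k = 1)
    (hself : complementMap A = krausMap A) : Degradable (krausMap A) :=
  ⟨e, A, isKrausRep_krausMap hA, LinearMap.id, isCPTP_id _, by rw [LinearMap.id_comp, hself]⟩

theorem antiDegradable_of_complementMap_eq_krausMap (hA : ∑ k, (A k)ᴴ * A k = 1)
    (hself : complementMap A = krausMap A) : AntiDegradable (krausMap A) :=
  ⟨e, A, isKrausRep_krausMap hA, LinearMap.id, isCPTP_id _, by rw [LinearMap.id_comp, hself]⟩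

end SelfComplementary

noncomputable abbrev threeToTwoKraus : Fin 2 → Matrix (Fin 2) (Fin 3) ℂ :=
  ![!![1, 0, 0; 0, (Real.sqrt 2 : ℂ)⁻¹, 0],
    !![0, (Real.sqrt 2 : ℂ)⁻¹, 0; 0, 0, 1]]

theorem inv_sqrt_two_mul_self : (Real.sqrt 2 : ℂ)⁻¹ * (Real.sqrt 2 : ℂ)⁻¹ = 2⁻¹ := by
  rw [← mul_inv, ← Complex.ofReal_mul, Real.mul_self_sqrt zero_le_two, Complex.ofReal_ofNat]

theorem sum_threeToTwoKraus_conjTranspose_mul_self :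
    ∑ k, (threeToTwoKraus k)ᴴ * threeToTwoKraus k = 1 := by
  ext i j
  fin_cases i <;> fin_cases j <;>
    simp [mul_apply, one_apply, Fin.sum_univ_succ, conjTranspose_apply, inv_sqrt_two_mul_self]
  norm_num

theorem complementMap_threeToTwoKraus : complementMap threeToTwoKraus = krausMap threeToTwoKraus := by
  refine LinearMap.ext fun ρ => ?_
  ext j k
  fin_cases j <;> fin_cases k <;>
    simp [complementMap, krausMap, trace, mul_apply, vecMul, dotProduct, conjTranspose_apply,
      Fin.sum_univ_succ, Complex.conj_ofReal] <;> ring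

/-- the channel `M_3 → M_2` with the given Kraus operators is
self-complementary, hence degradable and anti-degradable (degrading map the identity). -/
theorem three_to_two_self_complementary :
    complementMap
        (![!![1, 0, 0; 0, (Real.sqrt 2 : ℂ)⁻¹, 0],
           !![0, (Real.sqrt 2 : ℂ)⁻¹, 0; 0, 0, 1]] :
          Fin 2 → Matrix (Fin 2) (Fin 3) ℂ)
      = krausMap
        (![!![1, 0, 0; 0, (Real.sqrt 2 : ℂ)⁻¹, 0],
           !![0, (Real.sqrt 2 : ℂ)⁻¹, 0; 0, 0, 1]] :
          Fin 2 → Matrix (Fin 2) (Fin 3) ℂ) ∧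
    Degradable (krausMap
        (![!![1, 0, 0; 0, (Real.sqrt 2 : ℂ)⁻¹, 0],
           !![0, (Real.sqrt 2 : ℂ)⁻¹, 0; 0, 0, 1]] :
          Fin 2 → Matrix (Fin 2) (Fin 3) ℂ)) ∧
    AntiDegradable (krausMap
        (![!![1, 0, 0; 0, (Real.sqrt 2 : ℂ)⁻¹, 0],
           !![0, (Real.sqrt 2 : ℂ)⁻¹, 0; 0, 0, 1]] :
          Fin 2 → Matrix (Fin 2) (Fin 3) ℂ)) :=
  ⟨complementMap_threeToTwoKraus,
    degradable_of_complementMap_eq_krausMap sum_threeToTwoKraus_conjTranspose_mul_self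
      complementMap_threeToTwoKraus,
    antiDegradable_of_complementMap_eq_krausMap sum_threeToTwoKraus_conjTranspose_mul_self
      complementMap_threeToTwoKraus⟩
end
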